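/- arXiv:1409.1465 — 2 statements merged into one kernel-verified Lean document; each statement's English description precedes it below -/
import Mathlib

section
/- Let R be an n × n² column-stochastic matrix, v a stochastic vector in ℝⁿ, and 0 ≤ α < 1/2. Then there is at most one stochastic vector x ∈ ℝⁿ satisfying x = α R (x ⊗ x) + (1 − α) v. -/
/-
For two stochastic solutions x, y the vector v cancels from x - y = α R (x ⊗ x - y ⊗ y).
A column-stochastic R does not increase the 1-norm, and x ⊗ x - y ⊗ y = x ⊗ (x - y) + (x - y) ⊗ y
has 1-norm at most 2‖x - y‖₁. Hence ‖x - y‖₁ ≤ 2α ‖x - y‖₁, which forces x = y when α < 1/2.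
-/

open Finset Matrix

def Stoch' {α : Type*} [Fintype α] (x : α → ℝ) : Prop :=
  (∀ i, 0 ≤ x i) ∧ ∑ i, x i = 1

def norm1 {α : Type*} [Fintype α] (x : α → ℝ) : ℝ := ∑ i, |x i|

def kron {α β : Type*} (a : α → ℝ) (b : β → ℝ) : α × β → ℝ := fun p => a p.1 * b p.2

def kpow {n : ℕ} (x : Fin n → ℝ) (k : ℕ) : (Fin k → Fin n) → ℝ := fun f => ∏ i, x (f i)

def ColStoch {α β : Type*} [Fintype α] (R : Matrix α β ℝ) : Prop :=
  (∀ i j, 0 ≤ R i j) ∧ ∀ j, ∑ i, R i j = 1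

lemma kron_sub_kron {α β : Type*} (x x' : α → ℝ) (y y' : β → ℝ) :
    kron x y - kron x' y' = kron x (y - y') + kron (x - x') y' := by
  ext p
  simp only [kron, Pi.sub_apply, Pi.add_apply]
  ring

section Norm1

variable {α β : Type*} [Fintype α] [Fintype β]

lemma norm1_nonneg (z : α → ℝ) : 0 ≤ norm1 z :=
  sum_nonneg fun i _ => abs_nonneg (z i)

lemma norm1_eq_zero_iff {z : α → ℝ} : norm1 z = 0 ↔ z = 0 := by
  simp only [norm1, sum_eq_zero_iff_of_nonneg (fun i _ => abs_nonneg (z i)), mem_univ,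
    true_implies, abs_eq_zero, funext_iff, Pi.zero_apply]

lemma norm1_smul (c : ℝ) (z : α → ℝ) : norm1 (c • z) = |c| * norm1 z := by
  simp only [norm1, Pi.smul_apply, smul_eq_mul, abs_mul, mul_sum]

lemma norm1_mulVec_le {R : Matrix α β ℝ} (hR : ColStoch R) (z : β → ℝ) :
    norm1 (R *ᵥ z) ≤ norm1 z := by
  obtain ⟨hR0, hR1⟩ := hR
  calc norm1 (R *ᵥ z) ≤ ∑ i, ∑ j, R i j * |z j| := by
        refine sum_le_sum fun i _ => (abs_sum_le_sum_abs _ _).trans_eq ?_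
        simp only [abs_mul, abs_of_nonneg (hR0 i _)]
    _ = ∑ j, (∑ i, R i j) * |z j| := by
        rw [sum_comm]
        simp only [sum_mul]
    _ = norm1 z := by simp only [hR1, one_mul, norm1]

lemma norm1_kron {x : α → ℝ} {y : β → ℝ} : norm1 (kron x y) = norm1 x * norm1 y := by
  simp only [norm1, kron, abs_mul, Fintype.sum_prod_type, sum_mul_sum]

lemma norm1_add_le (z w : α → ℝ) : norm1 (z + w) ≤ norm1 z + norm1 w := by
  rw [norm1, norm1, norm1, ← sum_add_distrib]
  exact sum_le_sum fun i _ => abs_add_le (z i) (w i)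

lemma Stoch'.norm1_eq {x : α → ℝ} (hx : Stoch' x) : norm1 x = 1 := by
  rw [norm1, ← hx.2]
  exact sum_congr rfl fun i _ => abs_of_nonneg (hx.1 i)

lemma norm1_kron_sub_kron_le {x x' : α → ℝ} {y y' : β → ℝ} (hx : Stoch' x) (hy' : Stoch' y') :
    norm1 (kron x y - kron x' y') ≤ norm1 (y - y') + norm1 (x - x') := by
  calc norm1 (kron x y - kron x' y')
      ≤ norm1 (kron x (y - y')) + norm1 (kron (x - x') y') := by
        rw [kron_sub_kron]
        exact norm1_add_le _ _
    _ = norm1 (y - y') + norm1 (x - x') := by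
        rw [norm1_kron, norm1_kron, hx.norm1_eq, hy'.norm1_eq, one_mul, mul_one]

end Norm1

theorem stmt4_general {n : ℕ} (R : Matrix (Fin n) (Fin n × Fin n) ℝ) (hR : ColStoch R)
    (v : Fin n → ℝ) (α : ℝ) (hα0 : 0 ≤ α) (hα : α < 1/2)
    (x y : Fin n → ℝ) (hx : Stoch' x) (hy : Stoch' y)
    (hxe : x = fun i => α * R.mulVec (kron x x) i + (1 - α) * v i)
    (hye : y = fun i => α * R.mulVec (kron y y) i + (1 - α) * v i) :
    x = y := by
  have hdiff : x - y = α • R *ᵥ (kron x x - kron y y) := by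
    ext i
    rw [mulVec_sub, Pi.smul_apply, Pi.sub_apply, Pi.sub_apply, smul_eq_mul]
    nth_rewrite 1 [hxe, hye]
    ring
  have hcontract : norm1 (x - y) ≤ α * (2 * norm1 (x - y)) :=
    calc norm1 (x - y) = α * norm1 (R *ᵥ (kron x x - kron y y)) := by
          rw [hdiff, norm1_smul, abs_of_nonneg hα0]
      _ ≤ α * norm1 (kron x x - kron y y) :=
          mul_le_mul_of_nonneg_left (norm1_mulVec_le hR _) hα0
      _ ≤ α * (2 * norm1 (x - y)) :=
          mul_le_mul_of_nonneg_left ((norm1_kron_sub_kron_le hx hy).trans_eq (by ring)) hα0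
  have hzero : norm1 (x - y) = 0 := by nlinarith [norm1_nonneg (x - y)]
  exact sub_eq_zero.mp (norm1_eq_zero_iff.mp hzero)

theorem stmt4 {n : ℕ} (R : Matrix (Fin n) (Fin n × Fin n) ℝ) (hR : ColStoch R)
    (v : Fin n → ℝ) (hv : Stoch' v) (α : ℝ) (hα0 : 0 ≤ α) (hα : α < 1/2)
    (x y : Fin n → ℝ) (hx : Stoch' x) (hy : Stoch' y)
    (hxe : x = fun i => α * R.mulVec (kron x x) i + (1 - α) * v i)
    (hye : y = fun i => α * R.mulVec (kron y y) i + (1 - α) * v i) :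
    x = y :=
  stmt4_general R hR v α hα0 hα x y hx hy hxe hye
end

section
/- Define the sequence f₁ = α(1−α)² and f_{k+1} = α f_k² / ((1−2α)² + 4α f_k) for 0 < α < 1/2. Then f_{k+1} ≤ f_k/4 for all k ≥ 1, hence f_k ≤ α(1−α)²/4^{k−1}, and lim_{k→∞} f_{k+1}/f_k² = α/(1−2α)², so the sequence converges to 0 quadratically in the limit. -/
open Finset Matrix

def StochVec {α : Type*} [Fintype α] (x : α → ℝ) : Prop :=
  (∀ i, 0 ≤ x i) ∧ ∑ i, x i = 1

/-! With `a = α` and `c = (1 - 2α)²`, the step `t ↦ a t² / (c + 4 a t)` is at most `t / 4` because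
`c ≥ 0`, so the residuals decay at least geometrically and tend to `0`; then
`u (k+1) / u k ^ 2 = a / (c + 4 a u k) → a / c`. -/

open Filter Topology

lemma mul_sq_div_add_le_div_four {a c t : ℝ} (ha : 0 < a) (hc : 0 ≤ c) (ht : 0 < t) :
    a * t ^ 2 / (c + 4 * a * t) ≤ t / 4 := by
  rw [div_le_div_iff₀ (by positivity) (by norm_num)]
  nlinarith [mul_nonneg hc ht.le]

namespace ResidualRecurrence

variable {a c : ℝ} {u : ℕ → ℝ}

lemma pos (ha : 0 < a) (hc : 0 ≤ c) (h0 : 0 < u 0)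
    (hrec : ∀ k, u (k + 1) = a * u k ^ 2 / (c + 4 * a * u k)) (k : ℕ) : 0 < u k := by
  induction k with
  | zero => exact h0
  | succ k ih => rw [hrec]; positivity

lemma succ_le_div_four (ha : 0 < a) (hc : 0 ≤ c) (h0 : 0 < u 0)
    (hrec : ∀ k, u (k + 1) = a * u k ^ 2 / (c + 4 * a * u k)) (k : ℕ) : u (k + 1) ≤ u k / 4 :=
  hrec k ▸ mul_sq_div_add_le_div_four ha hc (pos ha hc h0 hrec k)

lemma le_div_four_pow (ha : 0 < a) (hc : 0 ≤ c) (h0 : 0 < u 0)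
    (hrec : ∀ k, u (k + 1) = a * u k ^ 2 / (c + 4 * a * u k)) (k : ℕ) : u k ≤ u 0 / 4 ^ k := by
  have hgeom := le_geom (u := u) (c := 1 / 4) (by norm_num) k fun j _ => by
    linarith [succ_le_div_four ha hc h0 hrec j]
  rwa [_root_.one_div_pow, one_div_mul_eq_div] at hgeom

lemma tendsto_zero (ha : 0 < a) (hc : 0 ≤ c) (h0 : 0 < u 0)
    (hrec : ∀ k, u (k + 1) = a * u k ^ 2 / (c + 4 * a * u k)) : Tendsto u atTop (𝓝 0) := by
  have hbound : Tendsto (fun k : ℕ => u 0 / 4 ^ k) atTop (𝓝 0) :=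
    tendsto_const_nhds.div_atTop (tendsto_pow_atTop_atTop_of_one_lt (by norm_num))
  exact squeeze_zero (fun k => (pos ha hc h0 hrec k).le) (le_div_four_pow ha hc h0 hrec) hbound

lemma tendsto_succ_div_sq (ha : 0 < a) (hc : 0 < c) (h0 : 0 < u 0)
    (hrec : ∀ k, u (k + 1) = a * u k ^ 2 / (c + 4 * a * u k)) :
    Tendsto (fun k => u (k + 1) / u k ^ 2) atTop (𝓝 (a / c)) := by
  have hratio : ∀ k, u (k + 1) / u k ^ 2 = a / (c + 4 * a * u k) := fun k => by
    have := pos ha hc.le h0 hrec k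
    rw [hrec]
    field_simp
  have hden : Tendsto (fun k => c + 4 * a * u k) atTop (𝓝 c) := by
    simpa using tendsto_const_nhds.add ((tendsto_zero ha hc.le h0 hrec).const_mul (4 * a))
  exact (tendsto_const_nhds.div hden hc.ne').congr fun k => (hratio k).symm

end ResidualRecurrence

open Filter Topology in
theorem stmt17 (α : ℝ) (hα0 : 0 < α) (hα : α < 1/2)
    (f : ℕ → ℝ) (h1 : f 1 = α * (1 - α) ^ 2)
    (hrec : ∀ k, 1 ≤ k → f (k + 1) = α * f k ^ 2 / ((1 - 2*α) ^ 2 + 4 * α * f k)) :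
    (∀ k, 1 ≤ k → f (k + 1) ≤ f k / 4) ∧
    (∀ k, 1 ≤ k → f k ≤ α * (1 - α) ^ 2 / 4 ^ (k - 1)) ∧
    Tendsto (fun k => f (k + 1) / f k ^ 2) atTop (𝓝 (α / (1 - 2*α) ^ 2)) ∧
    Tendsto f atTop (𝓝 0) := by
  let u : ℕ → ℝ := fun k => f (k + 1)
  have hc : 0 < (1 - 2 * α) ^ 2 := by nlinarith
  have h0 : 0 < u 0 := by simp only [u, h1]; nlinarith
  have hrec' : ∀ k, u (k + 1) = α * u k ^ 2 / ((1 - 2*α) ^ 2 + 4 * α * u k) :=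
    fun k => hrec (k + 1) (Nat.le_add_left 1 k)
  refine ⟨fun k hk => ?_, fun k hk => ?_, ?_, ?_⟩
  · obtain ⟨n, rfl⟩ : ∃ n, k = n + 1 := ⟨k - 1, by omega⟩
    exact ResidualRecurrence.succ_le_div_four hα0 hc.le h0 hrec' n
  · obtain ⟨n, rfl⟩ : ∃ n, k = n + 1 := ⟨k - 1, by omega⟩
    simpa [u, h1] using ResidualRecurrence.le_div_four_pow hα0 hc.le h0 hrec' n
  · exact (tendsto_add_atTop_iff_nat 1).mp (ResidualRecurrence.tendsto_succ_div_sq hα0 hc h0 hrec')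
  · exact (tendsto_add_atTop_iff_nat 1).mp (ResidualRecurrence.tendsto_zero hα0 hc.le h0 hrec')
end
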